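/- Let D and H be the dominator tree and the loop nesting tree of a flow graph G_s. Suppose x ≠ s is a vertex such that h(x), the parent of x in H, is not a sibling of x in D. Then no vertex in the path of H from s to h(x) is a sibling of x in D. -/

import Mathlib

namespace StrongConn

variable {V : Type*}

/-- `p` is a walk in the digraph `G` from `u` to `v`, recorded as the list of visited vertices. -/
def IsWalk (G : V → V → Prop) (u v : V) (p : List V) : Prop :=
  p.Chain' G ∧ p.head? = some u ∧ p.getLast? = some v

/-- The directed edge `(a,b)` occurs on the walk `p`. -/
def EdgeOn (a b : V) (p : List V) : Prop := (a, b) ∈ p.zip p.tail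

/-- `v` is reachable from `u` in `G`. -/
def Reach (G : V → V → Prop) (u v : V) : Prop := ∃ p, IsWalk G u v p

/-- `u` and `v` are strongly connected in `G`. -/
def SConn (G : V → V → Prop) (u v : V) : Prop := Reach G u v ∧ Reach G v u

def StronglyConnected (G : V → V → Prop) : Prop := ∀ u v, Reach G u v

/-- `G` with the edge `(a,b)` deleted. -/
def DelEdge (G : V → V → Prop) (a b : V) : V → V → Prop :=
  fun x y => G x y ∧ ¬(x = a ∧ y = b)

/-- `G` with the vertex `u` (and all incident edges) deleted. -/
def DelVertex (G : V → V → Prop) (u : V) : V → V → Prop :=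
  fun x y => G x y ∧ x ≠ u ∧ y ≠ u

/-- `C` is a strongly connected component of `G`. -/
def IsSCC (G : V → V → Prop) (C : Set V) : Prop :=
  C.Nonempty ∧ (∀ x ∈ C, ∀ y ∈ C, SConn G x y) ∧ ∀ x ∈ C, ∀ y, SConn G x y → y ∈ C

/-- `(a,b)` is a strong bridge: an edge whose removal increases the number of
strongly connected components, i.e. it separates some strongly connected pair. -/
def IsStrongBridge (G : V → V → Prop) (a b : V) : Prop :=
  G a b ∧ ∃ x y, SConn G x y ∧ ¬ SConn (DelEdge G a b) x y

/-- `u` is a strong articulation point: removing it increases the number of strongly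
connected components, i.e. it separates some strongly connected pair of other vertices. -/
def IsStrongArticulationPoint (G : V → V → Prop) (u : V) : Prop :=
  ∃ x y, x ≠ u ∧ y ≠ u ∧ SConn G x y ∧ ¬ SConn (DelVertex G u) x y

/-- The reverse digraph. -/
def Rev (G : V → V → Prop) : V → V → Prop := fun x y => G y x

/-- `u` dominates `v` in the flow graph `G_s`; equivalently, `u` is an ancestor of `v`
(and `v` a descendant of `u`) in the dominator tree of `G_s`. -/
def Dom (G : V → V → Prop) (s u v : V) : Prop :=
  ∀ p, IsWalk G s v p → u ∈ p

/-- `u` is the immediate dominator of `v` in `G_s` (the parent of `v` in the dominator tree). -/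
def Idom (G : V → V → Prop) (s u v : V) : Prop :=
  u ≠ v ∧ Dom G s u v ∧ ∀ w, w ≠ v → Dom G s w v → Dom G s w u

/-- Edge `(a,b)` is a bridge of the flow graph `G_s`: every walk from `s` to `b` uses it. -/
def IsBridge (G : V → V → Prop) (s a b : V) : Prop :=
  G a b ∧ ∀ p, IsWalk G s b p → EdgeOn a b p

/-- `r` is the head of some bridge of `G_s`, i.e. a non-`s` root in the bridge
decomposition of the dominator tree. -/
def IsBridgeHead (G : V → V → Prop) (s r : V) : Prop :=
  ∃ a, IsBridge G s a r

/-- `r` is the root of the tree containing `x` in the bridge decomposition of the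
dominator tree of `G_s`: `r` dominates `x`, `r` is `s` or a bridge head, and every
bridge head dominating `x` dominates `r`. -/
def IsBDRoot (G : V → V → Prop) (s r x : V) : Prop :=
  Dom G s r x ∧ (r = s ∨ IsBridgeHead G s r) ∧
    ∀ z, Dom G s z x → IsBridgeHead G s z → Dom G s z r

/-- A depth-first search tree of `G` rooted at `s`, given by a parent function and a
preorder numbering. -/
structure DFSTree (G : V → V → Prop) (s : V) where
  parent : V → V
  pre : V → ℕ
  parent_root : parent s = s
  parent_edge : ∀ v, v ≠ s → G (parent v) v
  root_reach : ∀ v, ∃ n, parent^[n] v = s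
  pre_inj : Function.Injective pre
  pre_parent : ∀ v, v ≠ s → pre (parent v) < pre v
  /-- Descendants of a vertex form a contiguous interval in preorder. -/
  interval : ∀ u v w, (∃ n, parent^[n] w = u) → pre u ≤ pre v → pre v ≤ pre w →
      ∃ n, parent^[n] v = u
  /-- The defining property of depth-first search trees: every edge going forward
  in preorder goes to a descendant. -/
  dfs_edge : ∀ u v, G u v → pre u < pre v → ∃ n, parent^[n] v = u

/-- `u` is an ancestor of `v` in the tree `T` (every vertex is an ancestor of itself). -/
def DFSTree.Anc {G : V → V → Prop} {s : V} (T : DFSTree G s) (u v : V) : Prop :=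
  ∃ n, T.parent^[n] v = u

/-- `x ∈ loop(u)` with respect to the tree-ancestor relation `tanc`: `x` is a descendant
of `u` and there is a walk from `x` to `u` using only descendants of `u`. -/
def InLoop (G : V → V → Prop) (tanc : V → V → Prop) (u x : V) : Prop :=
  tanc u x ∧ ∃ p, IsWalk G x u p ∧ ∀ y ∈ p, tanc u y

/-- `hp` is the parent function of the loop nesting tree of `G_s` with respect to the
DFS-tree ancestor relation `tanc`: `hp x` is the nearest proper ancestor `u` of `x`
in the DFS tree with `x ∈ loop(u)`. -/
def IsLoopParent (G : V → V → Prop) (s : V) (tanc : V → V → Prop) (hp : V → V) : Prop :=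
  hp s = s ∧ ∀ x, x ≠ s →
    (tanc (hp x) x ∧ hp x ≠ x ∧ InLoop G tanc (hp x) x ∧
      ∀ u, tanc u x → u ≠ x → InLoop G tanc u x → tanc u (hp x))

/-- `u` is an ancestor of `v` in the loop nesting tree with parent function `hp`. -/
def HAnc (hp : V → V) (u v : V) : Prop := ∃ n, hp^[n] v = u

/-- `w` is the nearest common ancestor of `x` and `y` in the loop nesting tree
with parent function `hp`. -/
def HNca (hp : V → V) (x y w : V) : Prop :=
  HAnc hp w x ∧ HAnc hp w y ∧ ∀ z, HAnc hp z x → HAnc hp z y → HAnc hp z w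

/-- `u` is a nontrivial dominator of `G_s`: `u ≠ s` and `u` is not a leaf of the
dominator tree (it properly dominates some vertex). -/
def NontrivialDom (G : V → V → Prop) (s u : V) : Prop :=
  u ≠ s ∧ ∃ w, w ≠ u ∧ Dom G s u w

/-- `a` and `b` are siblings in the dominator tree of `G_s`. -/
def SiblingInD (G : V → V → Prop) (s a b : V) : Prop :=
  a ≠ b ∧ ∃ w, Idom G s w a ∧ Idom G s w b

/-- Given the bridge-decomposition root function `r` and loop-nesting parent `hp`,
`z` is a boundary vertex. -/
def Boundary (s : V) (r hp : V → V) (z : V) : Prop := z = s ∨ r (hp z) ≠ r z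

/-- `z` is the nearest boundary ancestor of `x` in the loop nesting tree. -/
def IsNearestBoundary (s : V) (r hp : V → V) (x z : V) : Prop :=
  HAnc hp z x ∧ Boundary s r hp z ∧
    ∀ z', HAnc hp z' x → Boundary s r hp z' → HAnc hp z' z

/-- `x` and `y` are 2-edge-connected: no single edge deletion leaves them in
different strongly connected components. -/
def TwoEdgeConnected (G : V → V → Prop) (x y : V) : Prop :=
  ∀ a b, G a b → SConn (DelEdge G a b) x y

/-!
Let `w` be the common immediate dominator of `x` and of a sibling `z` on `H[s, h(x)]`.
Dominators and loop-tree ancestors are DFS-tree ancestors, so `w` precedes `h(x)` in preorder.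
Every walk `s → h(x)` continues along the tree path to `x`, and every walk `s → x` continues
along the loop walk back to `h(x)`; both continuations stay among the descendants of `h(x)`,
hence avoid `w` and all proper dominators of `h(x)`. So `w` is also the immediate dominator
of `h(x)`, i.e. `h(x)` is a sibling of `x`.
-/

theorem IsWalk.append {G : V → V → Prop} {a b c : V} {p q : List V} (hp : IsWalk G a b p)
    (hq : IsWalk G b c q) : IsWalk G a c (p ++ q.tail) := by
  obtain ⟨hpc, hph, hpl⟩ := hp
  obtain ⟨hqc, hqh, hql⟩ := hq
  obtain ⟨t, rfl⟩ : ∃ t, q = b :: t := by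
    cases q with
    | nil => simp at hqh
    | cons y t => simp only [List.head?_cons, Option.some.injEq] at hqh; exact ⟨t, hqh ▸ rfl⟩
  have hpnil : p ≠ [] := by rintro rfl; simp at hph
  refine ⟨hpc.append hqc.tail ?_, by rwa [List.head?_append_of_ne_nil _ hpnil], ?_⟩
  · intro u hu v hv
    rw [hpl, Option.mem_some_iff] at hu
    subst hu
    cases t with
    | nil => simp at hv
    | cons y t =>
      simp only [List.tail_cons, List.head?_cons, Option.mem_some_iff] at hv
      exact hv ▸ (List.isChain_cons_cons.1 hqc).1
  · cases t with
    | nil => simpa [hpl] using hql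
    | cons y t =>
      rw [List.tail_cons, List.getLast?_append_of_ne_nil _ (List.cons_ne_nil y t)]
      simpa using hql

theorem Dom.of_walk {G : V → V → Prop} {s u a b : V} {q : List V} (hb : Dom G s u b)
    (hq : IsWalk G a b q) (hu : u ∉ q) : Dom G s u a := by
  intro p hp
  rcases List.mem_append.1 (hb _ (hp.append hq)) with h | h
  · exact h
  · exact absurd (List.mem_of_mem_tail h) hu

namespace DFSTree

variable {G : V → V → Prop} {s : V} (T : DFSTree G s)

theorem anc_refl (v : V) : T.Anc v v := ⟨0, rfl⟩

theorem anc_parent (v : V) : T.Anc (T.parent v) v := ⟨1, rfl⟩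

variable {T}

theorem Anc.trans {a b c : V} (hab : T.Anc a b) (hbc : T.Anc b c) : T.Anc a c := by
  obtain ⟨n, rfl⟩ := hab
  obtain ⟨m, rfl⟩ := hbc
  exact ⟨n + m, Function.iterate_add_apply _ _ _ _⟩

theorem pre_parent_le (v : V) : T.pre (T.parent v) ≤ T.pre v := by
  by_cases hv : v = s
  · rw [hv, T.parent_root]
  · exact (T.pre_parent v hv).le

theorem Anc.pre_le {u v : V} (h : T.Anc u v) : T.pre u ≤ T.pre v := by
  obtain ⟨n, rfl⟩ := h
  induction n with
  | zero => rfl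
  | succ n ih => exact (Function.iterate_succ_apply' T.parent n v ▸ pre_parent_le _).trans ih

theorem Anc.pre_lt {u v : V} (h : T.Anc u v) (hne : u ≠ v) : T.pre u < T.pre v :=
  h.pre_le.lt_of_ne (T.pre_inj.ne hne)

theorem not_mem_of_pre_lt {u b : V} {q : List V} (h : T.pre u < T.pre b)
    (hq : ∀ y ∈ q, T.Anc b y) : u ∉ q :=
  fun hu => (hq u hu).pre_le.not_gt h

theorem Anc.exists_walk {u v : V} (h : T.Anc u v) :
    ∃ p, IsWalk G u v p ∧ ∀ y ∈ p, T.Anc u y ∧ T.Anc y v := by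
  obtain ⟨n, rfl⟩ := h
  induction n generalizing v with
  | zero => exact ⟨[v], ⟨List.isChain_singleton v, rfl, rfl⟩, by simp [T.anc_refl]⟩
  | succ n ih =>
    obtain ⟨q, hq, hmem⟩ := ih (v := T.parent v)
    rw [Function.iterate_succ_apply]
    by_cases hv : v = s
    · subst hv
      rw [T.parent_root] at hq hmem ⊢
      exact ⟨q, hq, hmem⟩
    · have hedge : IsWalk G (T.parent v) v [T.parent v, v] :=
        ⟨List.isChain_pair.2 (T.parent_edge v hv), rfl, rfl⟩
      refine ⟨q ++ [v], hq.append hedge, fun y hy => ?_⟩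
      rcases List.mem_append.1 hy with hy | hy
      · exact ⟨(hmem y hy).1, (hmem y hy).2.trans (T.anc_parent v)⟩
      · rw [List.mem_singleton.1 hy]
        exact ⟨⟨n + 1, rfl⟩, T.anc_refl v⟩

theorem anc_of_dom {u v : V} (h : Dom G s u v) : T.Anc u v := by
  obtain ⟨p, hp, hmem⟩ := Anc.exists_walk (T := T) (T.root_reach v)
  exact (hmem u (h p hp)).2

end DFSTree

namespace IsLoopParent

variable {G : V → V → Prop} {s : V} {T : DFSTree G s} {hp : V → V}

theorem anc_self (hlp : IsLoopParent G s T.Anc hp) (v : V) : T.Anc (hp v) v := by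
  by_cases hv : v = s
  · rw [hv, hlp.1]
    exact T.anc_refl s
  · exact (hlp.2 v hv).1

theorem anc_of_hAnc (hlp : IsLoopParent G s T.Anc hp) {u v : V} (h : HAnc hp u v) :
    T.Anc u v := by
  obtain ⟨n, rfl⟩ := h
  induction n with
  | zero => exact T.anc_refl v
  | succ n ih => exact Function.iterate_succ_apply' hp n v ▸ (hlp.anc_self _).trans ih

theorem idom_of_idom_of_pre_lt (hlp : IsLoopParent G s T.Anc hp) {w x : V} (hx : x ≠ s)
    (hwx : Idom G s w x) (hw : T.pre w < T.pre (hp x)) : Idom G s w (hp x) := by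
  obtain ⟨hanc, hne, ⟨-, q, hq, hqmem⟩, -⟩ := hlp.2 x hx
  obtain ⟨t, ht, htmem⟩ := hanc.exists_walk
  refine ⟨fun h => hw.ne (congrArg T.pre h),
    hwx.2.1.of_walk ht (DFSTree.not_mem_of_pre_lt hw fun y hy => (htmem y hy).1), ?_⟩
  intro u hu hdom
  have hux : T.pre u < T.pre (hp x) := (T.anc_of_dom hdom).pre_lt hu
  refine hwx.2.2 u (fun h => (hux.trans (hanc.pre_lt hne)).ne (congrArg T.pre h)) ?_
  exact hdom.of_walk hq (DFSTree.not_mem_of_pre_lt hux hqmem)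

end IsLoopParent

theorem stmt18_general (G : V → V → Prop) (s : V)
    (T : DFSTree G s) (hp : V → V) (hlp : IsLoopParent G s T.Anc hp)
    (x : V) (hx : x ≠ s) (hns : ¬ SiblingInD G s (hp x) x)
    (z : V) (hz : HAnc hp z (hp x)) :
    ¬ SiblingInD G s z x := by
  rintro ⟨-, w, hwz, hwx⟩
  have hw : T.pre w < T.pre (hp x) :=
    ((T.anc_of_dom hwz.2.1).pre_lt hwz.1).trans_le (hlp.anc_of_hAnc hz).pre_le
  exact hns ⟨(hlp.2 x hx).2.1, w, hlp.idom_of_idom_of_pre_lt hx hwx hw, hwx⟩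

/-- If `x ≠ s` and `h(x)` is not a sibling of `x` in the dominator tree `D`, then no
vertex on the path of `H` from `s` to `h(x)` is a sibling of `x` in `D`. -/
theorem stmt18 (G : V → V → Prop) (s : V) (hflow : ∀ v, Reach G s v)
    (T : DFSTree G s) (hp : V → V) (hlp : IsLoopParent G s T.Anc hp)
    (x : V) (hx : x ≠ s) (hns : ¬ SiblingInD G s (hp x) x)
    (z : V) (hz : HAnc hp z (hp x)) :
    ¬ SiblingInD G s z x :=
  stmt18_general G s T hp hlp x hx hns z hz

end StrongConn
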